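/- arXiv:1804.00018 — 3 statements merged into one kernel-verified Lean document; each statement's English description precedes it below -/
import Mathlib

section
/- Let $U_+, U_0, U_- : (-\infty, \tau_0] \to [0,\infty)$ be differentiable functions satisfying, for some constant $\epsilon \in (0, 1/100)$: $\frac{d}{d\tau} U_+ \geq U_+ - \epsilon (U_+ + U_0 + U_-)$, $|\frac{d}{d\tau} U_0| \leq \epsilon (U_+ + U_0 + U_-)$, $\frac{d}{d\tau} U_- \leq -U_- + \epsilon (U_+ + U_0 + U_-)$. Suppose moreover $U_+ + U_0 + U_- \to 0$ as $\tau \to -\infty$ and $U_0(\tau) + U_-(\tau) \leq \epsilon \, U_+(\tau)$ for all $\tau \leq \tau_0$. Then there exists a constant $C$ such that $U_+(\tau) \leq C e^{(1 - 3\epsilon)\tau}$ for all $\tau \leq \tau_0$. -/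
open Filter Set

/-- ODE iteration step: if the unstable mode dominates and the system satisfies the
stated differential inequalities, then `U₊(τ) ≤ C e^{(1-3ε)τ}` as `τ → -∞`. -/
theorem stmt_2 (τ0 ε : ℝ) (hε : 0 < ε) (hε' : ε < 1 / 100)
    (Up U0 Um Up' U0' Um' : ℝ → ℝ)
    (hpos : ∀ τ ≤ τ0, 0 ≤ Up τ ∧ 0 ≤ U0 τ ∧ 0 ≤ Um τ)
    (hderiv : ∀ τ ≤ τ0, HasDerivAt Up (Up' τ) τ ∧ HasDerivAt U0 (U0' τ) τ ∧
      HasDerivAt Um (Um' τ) τ)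
    (h1 : ∀ τ ≤ τ0, Up τ - ε * (Up τ + U0 τ + Um τ) ≤ Up' τ)
    (h2 : ∀ τ ≤ τ0, |U0' τ| ≤ ε * (Up τ + U0 τ + Um τ))
    (h3 : ∀ τ ≤ τ0, Um' τ ≤ -Um τ + ε * (Up τ + U0 τ + Um τ))
    (hlim : Tendsto (fun τ => Up τ + U0 τ + Um τ) atBot (nhds 0))
    (hdom : ∀ τ ≤ τ0, U0 τ + Um τ ≤ ε * Up τ) :
    ∃ C : ℝ, ∀ τ ≤ τ0, Up τ ≤ C * Real.exp ((1 - 3 * ε) * τ) := by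
  set g : ℝ → ℝ := fun τ => Up τ * Real.exp (-(1 - 3 * ε) * τ) with hg
  set g' : ℝ → ℝ := fun τ => (Up' τ - (1 - 3 * ε) * Up τ) * Real.exp (-(1 - 3 * ε) * τ)
    with hg'
  have hgd : ∀ τ ∈ Iic τ0, HasDerivAt g (g' τ) τ := by
    intro τ hτ
    have h := ((hderiv τ hτ).1.mul
      (((hasDerivAt_id τ).const_mul (-(1 - 3 * ε))).exp))
    convert h using 1
    · rfl
    · rfl
    · rfl
    simp [hg']
    ring
  have hmono : MonotoneOn g (Iic τ0) := by
    apply monotoneOn_of_deriv_nonneg (convex_Iic τ0)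
    · exact fun τ hτ => (hgd τ hτ).continuousAt.continuousWithinAt
    · intro τ hτ
      exact ((hgd τ (le_of_lt (by simpa using hτ))).differentiableAt).differentiableWithinAt
    · intro τ hτ
      rw [interior_Iic] at hτ
      have hτ' : τ ≤ τ0 := le_of_lt hτ
      rw [(hgd τ hτ').deriv]
      have hup := (hpos τ hτ').1
      have key : (1 - 3 * ε) * Up τ ≤ Up' τ := by
        have := h1 τ hτ'
        have hd := hdom τ hτ'
        nlinarith [mul_le_mul_of_nonneg_left hd hε.le, mul_nonneg hε.le hup, mul_nonneg (mul_nonneg hε.le hε.le) hup]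
      exact mul_nonneg (by linarith) (Real.exp_pos _).le
  refine ⟨g τ0, fun τ hτ => ?_⟩
  have := hmono (mem_Iic.mpr hτ) (mem_Iic.mpr le_rfl) hτ
  have hgτ : g τ ≤ g τ0 := this
  have hexp : Real.exp (-(1 - 3 * ε) * τ) * Real.exp ((1 - 3 * ε) * τ) = 1 := by
    rw [← Real.exp_add]; ring_nf; exact Real.exp_zero
  have h2' := mul_le_mul_of_nonneg_right hgτ (Real.exp_pos ((1 - 3 * ε) * τ)).le
  calc Up τ = g τ * Real.exp ((1 - 3 * ε) * τ) := by
        simp only [hg, mul_assoc, hexp, mul_one]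
    _ ≤ g τ0 * Real.exp ((1 - 3 * ε) * τ) := h2'
end

section
/- Let $r : (-\infty, 0] \times (t_1, \mathcal{T}] \to (0,\infty)$ satisfy $r_t = \frac{r_{zz}}{1+r_z^2} - \frac{n-1}{r}$ with $0 \leq -r_{zz} \leq C_2 r^{-5/2}$ whenever $r \geq C_1$, and suppose $r(\bar{z}, \cdot)$ is decreasing in $t$ with $2(n-1)[\mathcal{T}(\bar z) - t] \leq r(\bar z, t)^2$. Then whenever $r(\bar{z}, t)$ is sufficiently large, $r(\bar{z},t)^2 \leq 2(n-1)[\mathcal{T}(\bar{z}) - t] + 8 C_2 [\mathcal{T}(\bar{z}) - t]^{1/4} + C_1^2$. -/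
open Set Filter

/-- Upper bound for the radius in terms of the time to extinction: if
`r_t = r_zz/(1+r_z²) - (n-1)/r` with `0 ≤ -r_zz ≤ C₂ r^{-5/2}` whenever `r ≥ C₁`,
`r(z̄,·)` is decreasing with `r(z̄,t)² ≥ 2(n-1)(𝒯-t)` and `r(z̄,t) → 0` as `t → 𝒯⁻`,
then whenever `r(z̄,t)` is sufficiently large,
`r(z̄,t)² ≤ 2(n-1)(𝒯-t) + 8C₂(𝒯-t)^{1/4} + C₁²`. -/
theorem stmt_10 (n : ℕ) (hn : 2 ≤ n) (C1 C2 : ℝ) (hC1 : 1 ≤ C1) (hC2 : 1 ≤ C2)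
    (t1 𝒯 zb : ℝ) (hzb : zb ≤ 0) (ht : t1 < 𝒯) (r : ℝ → ℝ → ℝ)
    (hpos : ∀ z ≤ 0, ∀ t, t1 < t → t < 𝒯 → 0 < r z t)
    (hPDE : ∀ t, t1 < t → t < 𝒯 → HasDerivAt (fun s => r zb s)
      (deriv (deriv (fun w => r w t)) zb / (1 + (deriv (fun w => r w t) zb) ^ 2)
        - ((n : ℝ) - 1) / r zb t) t)
    (hzz : ∀ t, t1 < t → t < 𝒯 → C1 ≤ r zb t →
      0 ≤ -(deriv (deriv (fun w => r w t)) zb) ∧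
        -(deriv (deriv (fun w => r w t)) zb) ≤ C2 * (r zb t) ^ (-(5 : ℝ) / 2))
    (hdec : AntitoneOn (fun t => r zb t) (Ioo t1 𝒯))
    (hlow : ∀ t, t1 < t → t < 𝒯 → 2 * ((n : ℝ) - 1) * (𝒯 - t) ≤ (r zb t) ^ 2)
    (hlim : Tendsto (fun t => r zb t) (nhdsWithin 𝒯 (Iio 𝒯)) (nhds 0)) :
    ∃ R : ℝ, ∀ t, t1 < t → t < 𝒯 → R ≤ r zb t →
      (r zb t) ^ 2 ≤ 2 * ((n : ℝ) - 1) * (𝒯 - t) + 8 * C2 * (𝒯 - t) ^ ((1 : ℝ) / 4)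
        + C1 ^ 2 := by
  have hC1pos : (0 : ℝ) < C1 := lt_of_lt_of_le one_pos hC1
  have hC2pos : (0 : ℝ) < C2 := lt_of_lt_of_le one_pos hC2
  have hn1 : (1 : ℝ) ≤ (n : ℝ) - 1 := by
    have : (2 : ℝ) ≤ (n : ℝ) := by exact_mod_cast hn
    linarith
  refine ⟨C1, fun t htl htu hrt => ?_⟩
  -- find t' ∈ (t, 𝒯) with r zb t' < C1
  have hev : ∀ᶠ s in nhdsWithin 𝒯 (Iio 𝒯), r zb s < C1 := by
    have := hlim (Iio_mem_nhds hC1pos)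
    exact this
  have hev2 : ∀ᶠ s in nhdsWithin 𝒯 (Iio 𝒯), t < s ∧ s < 𝒯 := by
    filter_upwards [nhdsWithin_le_nhds (Ioi_mem_nhds htu), self_mem_nhdsWithin] with s h1 h2
    exact ⟨h1, h2⟩
  obtain ⟨t', ht'C1, ht'gt, ht'lt⟩ : ∃ s, r zb s < C1 ∧ t < s ∧ s < 𝒯 := by
    rcases (hev.and hev2).exists with ⟨s, h1, h2, h3⟩
    exact ⟨s, h1, h2, h3⟩
  -- continuity of r zb on relevant set
  have hcontAt : ∀ s, t1 < s → s < 𝒯 → ContinuousAt (fun u => r zb u) s := fun s h1 h2 =>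
    (hPDE s h1 h2).continuousAt
  -- IVT: find t̃ ∈ [t, t'] with r zb t̃ = C1
  have hcontIcc : ContinuousOn (fun u => r zb u) (Icc t t') := fun s hs =>
    (hcontAt s (lt_of_lt_of_le htl hs.1) (lt_of_le_of_lt hs.2 ht'lt)).continuousWithinAt
  obtain ⟨tt, htt, httC1⟩ : ∃ tt ∈ Icc t t', r zb tt = C1 := by
    have := intermediate_value_Icc' (le_of_lt ht'gt) hcontIcc
      (by exact ⟨le_of_lt ht'C1, hrt⟩ : C1 ∈ Icc (r zb t') (r zb t))
    rcases this with ⟨tt, h1, h2⟩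
    exact ⟨tt, h1, h2⟩
  have htt1 : t1 < tt := lt_of_lt_of_le htl htt.1
  have htt𝒯 : tt < 𝒯 := lt_of_le_of_lt htt.2 ht'lt
  -- the monotone quantity
  set F : ℝ → ℝ := fun s => (r zb s) ^ 2 + 2 * ((n : ℝ) - 1) * s
      - 8 * C2 * (𝒯 - s) ^ ((1 : ℝ) / 4) with hF
  -- derivative of F at each point of [t, tt]
  have key : ∀ s, t ≤ s → s ≤ tt → HasDerivAt F
      (2 * r zb s ^ 1 * (deriv (deriv (fun w => r w s)) zb /
          (1 + (deriv (fun w => r w s) zb) ^ 2) - ((n : ℝ) - 1) / r zb s)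
        + 2 * ((n : ℝ) - 1)
        - 8 * C2 * ((1 : ℝ) / 4 * (𝒯 - s) ^ ((1 : ℝ) / 4 - 1) * (-1))) s := by
    intro s hs1 hs2
    have h1 : t1 < s := lt_of_lt_of_le htl hs1
    have h2 : s < 𝒯 := lt_of_le_of_lt hs2 htt𝒯
    have hr := hPDE s h1 h2
    have hsq : HasDerivAt (fun u => (r zb u) ^ 2)
        (2 * r zb s ^ 1 * (deriv (deriv (fun w => r w s)) zb /
          (1 + (deriv (fun w => r w s) zb) ^ 2) - ((n : ℝ) - 1) / r zb s)) s := by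
      have := hr.fun_pow 2
      simpa using this
    have hlin : HasDerivAt (fun u : ℝ => 2 * ((n : ℝ) - 1) * u) (2 * ((n : ℝ) - 1)) s := by
      simpa using (hasDerivAt_id s).const_mul (2 * ((n : ℝ) - 1))
    have hsub : HasDerivAt (fun u : ℝ => 𝒯 - u) (-1) s := by
      simpa using (hasDerivAt_id s).const_sub 𝒯
    have hpow : HasDerivAt (fun u : ℝ => (𝒯 - u) ^ ((1 : ℝ) / 4))
        ((1 : ℝ) / 4 * (𝒯 - s) ^ ((1 : ℝ) / 4 - 1) * (-1)) s := by
      have := hsub.rpow_const (p := (1 : ℝ) / 4) (Or.inl (ne_of_gt (sub_pos.mpr h2)))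
      simpa [mul_comm] using this
    exact (hsq.add hlin).sub ((hpow.const_mul (8 * C2)))
  -- derivative nonneg
  have dnonneg : ∀ s, t ≤ s → s ≤ tt →
      0 ≤ 2 * r zb s ^ 1 * (deriv (deriv (fun w => r w s)) zb /
          (1 + (deriv (fun w => r w s) zb) ^ 2) - ((n : ℝ) - 1) / r zb s)
        + 2 * ((n : ℝ) - 1)
        - 8 * C2 * ((1 : ℝ) / 4 * (𝒯 - s) ^ ((1 : ℝ) / 4 - 1) * (-1)) := by
    intro s hs1 hs2
    have h1 : t1 < s := lt_of_lt_of_le htl hs1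
    have h2 : s < 𝒯 := lt_of_le_of_lt hs2 htt𝒯
    have hrp : 0 < r zb s := hpos zb hzb s h1 h2
    have hrge : C1 ≤ r zb s := by
      have := hdec ⟨h1, h2⟩ ⟨htt1, htt𝒯⟩ hs2
      simpa [httC1] using this
    obtain ⟨hzz1, hzz2⟩ := hzz s h1 h2 hrge
    set A := deriv (deriv (fun w => r w s)) zb with hA
    set B := deriv (fun w => r w s) zb with hB
    have hc1 : (1 : ℝ) ≤ 1 + B ^ 2 := by nlinarith [sq_nonneg B]
    have hcpos : (0 : ℝ) < 1 + B ^ 2 := lt_of_lt_of_le one_pos hc1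
    -- -A/(1+B²) ≤ -A ≤ C2 * r^{-5/2}
    have hdiv : -(A / (1 + B ^ 2)) ≤ C2 * (r zb s) ^ (-(5 : ℝ) / 2) := by
      have : -(A / (1 + B ^ 2)) = (-A) / (1 + B ^ 2) := by ring
      rw [this]
      exact le_trans (div_le_self hzz1 hc1) hzz2
    -- r * r^{-5/2} = r^{-3/2}
    have hrmul : r zb s * r zb s ^ (-(5 : ℝ) / 2) = r zb s ^ (-(3 : ℝ) / 2) := by
      nth_rewrite 1 [← Real.rpow_one (r zb s)]
      rw [← Real.rpow_add hrp]
      norm_num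
    -- r² ≥ 𝒯 - s > 0 hence r^{-3/2} ≤ (𝒯-s)^{-3/4}
    have hTs : 0 < 𝒯 - s := sub_pos.mpr h2
    have hr2 : 𝒯 - s ≤ (r zb s) ^ 2 := by
      have := hlow s h1 h2
      nlinarith
    have hkey : (r zb s) ^ (-(3 : ℝ) / 2) ≤ (𝒯 - s) ^ (-(3 : ℝ) / 4) := by
      have h3 : ((r zb s) ^ 2 : ℝ) ^ (-(3 : ℝ) / 4) ≤ (𝒯 - s) ^ (-(3 : ℝ) / 4) :=
        Real.rpow_le_rpow_of_nonpos hTs hr2 (by norm_num)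
      have h4 : ((r zb s) ^ 2 : ℝ) ^ (-(3 : ℝ) / 4) = (r zb s) ^ (-(3 : ℝ) / 2) := by
        rw [← Real.rpow_natCast (r zb s) 2, ← Real.rpow_mul hrp.le]
        norm_num
      linarith [h3, h4.ge, h4.le]
    have hexp : ((1 : ℝ) / 4 - 1) = (-(3 : ℝ) / 4) := by norm_num
    have hBcancel : r zb s * (((n : ℝ) - 1) / r zb s) = (n : ℝ) - 1 :=
      mul_div_cancel₀ _ (ne_of_gt hrp)
    -- combine
    have hmain : -(2 * r zb s * (A / (1 + B ^ 2))) ≤ 2 * C2 * (𝒯 - s) ^ ((1 : ℝ) / 4 - 1) := by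
      rw [hexp]
      have step1 : -(2 * r zb s * (A / (1 + B ^ 2))) = 2 * r zb s * (-(A / (1 + B ^ 2))) := by
        ring
      rw [step1]
      have step2 : 2 * r zb s * (-(A / (1 + B ^ 2))) ≤
          2 * r zb s * (C2 * (r zb s) ^ (-(5 : ℝ) / 2)) := by
        apply mul_le_mul_of_nonneg_left hdiv
        positivity
      have step3 : 2 * r zb s * (C2 * (r zb s) ^ (-(5 : ℝ) / 2)) =
          2 * C2 * (r zb s) ^ (-(3 : ℝ) / 2) := by
        rw [← hrmul]; ring
      have step4 : 2 * C2 * (r zb s) ^ (-(3 : ℝ) / 2) ≤ 2 * C2 * (𝒯 - s) ^ (-(3 : ℝ) / 4) :=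
        mul_le_mul_of_nonneg_left hkey (by positivity)
      linarith [step2, step3.le, step3.ge, step4]
    have expand : 2 * r zb s ^ 1 * (A / (1 + B ^ 2) - ((n : ℝ) - 1) / r zb s)
        = 2 * r zb s * (A / (1 + B ^ 2)) - 2 * ((n : ℝ) - 1) := by
      rw [pow_one]
      have : 2 * r zb s * (A / (1 + B ^ 2) - ((n : ℝ) - 1) / r zb s)
          = 2 * r zb s * (A / (1 + B ^ 2)) - 2 * (r zb s * (((n : ℝ) - 1) / r zb s)) := by ring
      rw [this, hBcancel]
    linarith [hmain, expand]
  -- monotonicity of F on [t, tt]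
  have hmono : MonotoneOn F (Icc t tt) := by
    apply monotoneOn_of_deriv_nonneg (convex_Icc t tt)
    · intro s hs
      exact (key s hs.1 hs.2).continuousAt.continuousWithinAt
    · intro s hs
      rw [interior_Icc] at hs
      exact (key s hs.1.le hs.2.le).differentiableAt.differentiableWithinAt
    · intro s hs
      rw [interior_Icc] at hs
      rw [(key s hs.1.le hs.2.le).deriv]
      exact dnonneg s hs.1.le hs.2.le
  have hFle : F t ≤ F tt := hmono ⟨le_refl t, htt.1⟩ ⟨htt.1, le_refl tt⟩ htt.1
  -- final arithmetic
  have h8 : 0 ≤ 8 * C2 * (𝒯 - tt) ^ ((1 : ℝ) / 4) :=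
    mul_nonneg (by positivity) (Real.rpow_nonneg (sub_nonneg.mpr htt𝒯.le) _)
  have htt𝒯' : 2 * ((n : ℝ) - 1) * tt ≤ 2 * ((n : ℝ) - 1) * 𝒯 := by
    apply mul_le_mul_of_nonneg_left htt𝒯.le
    nlinarith
  simp only [hF, httC1] at hFle
  linarith [hFle, h8, htt𝒯']
end

section
/- Suppose $r : [0, \infty) \times (-\infty, T] \to [C_1, \infty)$ is smooth, satisfies $r(z,t)^2 \geq (n-1)\mathcal{H}^{-1} z$, and the quantity $w(z,t) := r(z,t) r_z(z,t)$ satisfies $|w_t(z,t)| \leq \frac{4 C_0^3}{r(z,t)^2}$ for all $z \geq 0, t \leq T$. Then for any $t_1, t_2 \leq T$, $\liminf_{z \to \infty} w(z, t_1) = \liminf_{z \to \infty} w(z, t_2)$. -/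
open Set Filter

lemma sSup_eq_sSup_of_eps (S1 S2 : Set ℝ)
    (h12 : ∀ ε > (0:ℝ), ∀ a ∈ S1, a - ε ∈ S2)
    (h21 : ∀ ε > (0:ℝ), ∀ a ∈ S2, a - ε ∈ S1) : sSup S1 = sSup S2 := by
  rcases S1.eq_empty_or_nonempty with h1 | h1
  · have h2 : S2 = ∅ := by
      rcases S2.eq_empty_or_nonempty with h2 | ⟨a, ha⟩
      · exact h2
      · have := h21 1 one_pos a ha
        simp [h1] at this
    rw [h1, h2]
  obtain ⟨a1, ha1⟩ := h1
  have h2 : S2.Nonempty := ⟨a1 - 1, h12 1 one_pos a1 ha1⟩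
  by_cases hb1 : BddAbove S1
  · have hb2 : BddAbove S2 := by
      obtain ⟨M, hM⟩ := hb1
      exact ⟨M + 1, fun a ha => by have := hM (h21 1 one_pos a ha); linarith⟩
    apply le_antisymm
    · apply csSup_le ⟨a1, ha1⟩
      intro a ha
      refine le_of_forall_pos_le_add ?_
      intro ε hε
      have := le_csSup hb2 (h12 ε hε a ha); linarith
    · apply csSup_le h2
      intro a ha
      refine le_of_forall_pos_le_add ?_
      intro ε hε
      have := le_csSup hb1 (h21 ε hε a ha); linarith
  · have hb2 : ¬ BddAbove S2 := by
      rintro ⟨M, hM⟩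
      exact hb1 ⟨M + 1, fun a ha => by have := hM (h12 1 one_pos a ha); linarith⟩
    rw [Real.sSup_of_not_bddAbove hb1, Real.sSup_of_not_bddAbove hb2]

/-- Time-independence of the asymptotic slope: if `w = r r_z` satisfies
`|w_t| ≤ 4C₀³/r²` and `r(z,t)² ≥ (n-1)ℋ⁻¹ z`, then
`liminf_{z→∞} w(z,t)` has the same value for all times `t ≤ T`. -/
theorem stmt_16 (n : ℕ) (hn : 2 ≤ n) (C0 C1 ℋ T : ℝ)
    (hC0 : 1 ≤ C0) (hC1 : 1 ≤ C1) (hℋ : 0 < ℋ)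
    (r rz w wt : ℝ → ℝ → ℝ)
    (hwdef : ∀ z ≥ 0, ∀ t ≤ T, w z t = r z t * rz z t)
    (hr1 : ∀ z ≥ 0, ∀ t ≤ T, C1 ≤ r z t)
    (hr2 : ∀ z ≥ 0, ∀ t ≤ T, ((n : ℝ) - 1) / ℋ * z ≤ (r z t) ^ 2)
    (hw : ∀ z ≥ 0, ∀ t ≤ T, HasDerivAt (fun s => w z s) (wt z t) t)
    (hwt : ∀ z ≥ 0, ∀ t ≤ T, |wt z t| ≤ 4 * C0 ^ 3 / (r z t) ^ 2) :
    ∀ t1 ≤ T, ∀ t2 ≤ T,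
      Filter.liminf (fun z => w z t1) atTop = Filter.liminf (fun z => w z t2) atTop := by
  intro t1 ht1 t2 ht2
  have hn1 : (1:ℝ) ≤ (n:ℝ) - 1 := by
    have : (2:ℝ) ≤ (n:ℝ) := by exact_mod_cast hn
    linarith
  have hC0pos : (0:ℝ) < 4 * C0 ^ 3 := by positivity
  set K : ℝ := 4 * C0 ^ 3 * ℋ / ((n:ℝ) - 1) * |t1 - t2| with hK
  -- key pointwise bound via MVT in time
  have key : ∀ z ≥ (1:ℝ), |w z t1 - w z t2| ≤ K * z⁻¹ := by
    intro z hz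
    have hz0 : (0:ℝ) < z := lt_of_lt_of_le one_pos hz
    have hrpos : ∀ t ∈ Iic T, (0:ℝ) < (r z t) ^ 2 := by
      intro t ht
      have := hr2 z hz0.le t ht
      have hlb : (0:ℝ) < ((n:ℝ) - 1) / ℋ * z := by positivity
      linarith
    have hbound : ∀ t ∈ Iic T, ‖wt z t‖ ≤ (4 * C0 ^ 3 * ℋ / ((n:ℝ) - 1)) * z⁻¹ := by
      intro t ht
      have h1 := hwt z hz0.le t ht
      have h2 := hr2 z hz0.le t ht
      have hlb : (0:ℝ) < ((n:ℝ) - 1) / ℋ * z := by positivity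
      have h3 : 4 * C0 ^ 3 / (r z t) ^ 2 ≤ 4 * C0 ^ 3 / (((n:ℝ) - 1) / ℋ * z) :=
        div_le_div_of_nonneg_left hC0pos.le hlb h2
      have h4 : 4 * C0 ^ 3 / (((n:ℝ) - 1) / ℋ * z) = (4 * C0 ^ 3 * ℋ / ((n:ℝ) - 1)) * z⁻¹ := by
        field_simp
      calc ‖wt z t‖ = |wt z t| := rfl
        _ ≤ 4 * C0 ^ 3 / (r z t) ^ 2 := h1
        _ ≤ _ := by rw [← h4]; exact h3
    have hmvt := (convex_Iic T).norm_image_sub_le_of_norm_hasDerivWithin_le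
      (f := fun s => w z s) (f' := fun s => wt z s)
      (fun t ht => (hw z hz0.le t ht).hasDerivWithinAt) hbound
      (mem_Iic.mpr ht2) (mem_Iic.mpr ht1)
    have : |w z t1 - w z t2| ≤ (4 * C0 ^ 3 * ℋ / ((n:ℝ) - 1)) * z⁻¹ * |t1 - t2| := hmvt
    calc |w z t1 - w z t2| ≤ (4 * C0 ^ 3 * ℋ / ((n:ℝ) - 1)) * z⁻¹ * |t1 - t2| := this
      _ = K * z⁻¹ := by rw [hK]; ring
  have hDtend : Tendsto (fun z => w z t1 - w z t2) atTop (nhds 0) := by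
    refine squeeze_zero_norm' ?_ (show Tendsto (fun z : ℝ => K * z⁻¹) atTop (nhds 0) by
      simpa using tendsto_inv_atTop_zero.const_mul K)
    filter_upwards [eventually_ge_atTop (1:ℝ)] with z hz
    exact key z hz
  have hsmall : ∀ ε > (0:ℝ), ∀ᶠ z in atTop, |w z t1 - w z t2| < ε := by
    intro ε hε
    have := Metric.tendsto_nhds.mp hDtend ε hε
    filter_upwards [this] with z hz
    simpa [Real.dist_eq] using hz
  rw [Filter.liminf_eq, Filter.liminf_eq]
  apply sSup_eq_sSup_of_eps
  · intro ε hε a ha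
    filter_upwards [ha, hsmall ε hε] with z h1 h2
    have := abs_lt.mp h2
    linarith [this.1, this.2]
  · intro ε hε a ha
    filter_upwards [ha, hsmall ε hε] with z h1 h2
    have := abs_lt.mp h2
    linarith [this.1, this.2]
end
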